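/- arXiv:1910.05661 — 7 statements merged into one kernel-verified Lean document; each statement's English description precedes it below -/
import Mathlib

section
/- Suppose that A, B, C form a 3-phase length s Golay sequence triad. Then A(i)·B(i)·C(i) = A(s−1−i)·B(s−1−i)·C(s−1−i) for each integer i satisfying 0 ≤ i < s. -/
open scoped BigOperators

/-- `ω = e^{2πi/3}`, a primitive cube root of unity. -/
noncomputable def ω : ℂ := Complex.exp (2 * Real.pi * Complex.I / 3)

/-- A length-`s` sequence: a function `ℤ → ℂ` vanishing outside `{0, …, s-1}`. -/
def IsLenSeq (s : ℕ) (A : ℤ → ℂ) : Prop :=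
  ∀ i : ℤ, i < 0 ∨ (s : ℤ) ≤ i → A i = 0

/-- A 3-phase length-`s` sequence: a length-`s` sequence whose entries on
`{0, …, s-1}` lie in `{1, ω, ω²}`. -/
def IsThreePhaseSeq (s : ℕ) (A : ℤ → ℂ) : Prop :=
  IsLenSeq s A ∧ ∀ i : ℤ, 0 ≤ i → i < (s : ℤ) → A i ∈ ({1, ω, ω ^ 2} : Set ℂ)

/-- Aperiodic autocorrelation function `C_A(u) = Σ_{i ∈ ℤ} A(i) conj(A(i+u))`. -/
noncomputable def aperCorr (A : ℤ → ℂ) (u : ℤ) : ℂ :=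
  ∑' i : ℤ, A i * (starRingEnd ℂ) (A (i + u))

/-- Three 3-phase length-`s` sequences forming a 3-phase Golay sequence triad. -/
def GolaySeqTriad (s : ℕ) (A B C : ℤ → ℂ) : Prop :=
  IsThreePhaseSeq s A ∧ IsThreePhaseSeq s B ∧ IsThreePhaseSeq s C ∧
    ∀ u : ℤ, u ≠ 0 → aperCorr A u + aperCorr B u + aperCorr C u = 0

/-!
Each `x ∈ {1, ω, ω²}` is `ω ^ e` with `e ∈ {0, 1, -1}` and `Im x = e · Im ω`, so if a sum of such
cube roots vanishes, their exponents sum to `0` and their product is `1`. For `u = s - 1 - j > 0`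
the terms of `C_A(u) + C_B(u) + C_C(u)` are cube roots of unity, and with `f = A · B · C` their
product is `∏_{k ≤ j} f(k) conj f(k + u) = ∏_{k ≤ j} f(k) conj f(s - 1 - k)`. All these prefix
products being `1` for `j ≤ s - 2`, every factor `f(j) conj f(s - 1 - j)` is `1`, and since
`|f| = 1` this says `f(j) = f(s - 1 - j)`.
-/

open Finset ComplexConjugate

theorem prod_zpow_eq_zpow_sum {ι G₀ : Type*} [CommGroupWithZero G₀] {a : G₀} (ha : a ≠ 0)
    (s : Finset ι) (f : ι → ℤ) : ∏ i ∈ s, a ^ f i = a ^ ∑ i ∈ s, f i := by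
  induction s using Finset.cons_induction with
  | empty => simp
  | cons i s hi ih => rw [prod_cons, sum_cons, ih, zpow_add₀ ha]

theorem eq_one_of_prod_range_succ_eq_one {M : Type*} [CommMonoid M] {g : ℕ → M} {n : ℕ}
    (h : ∀ j ≤ n, ∏ k ∈ range (j + 1), g k = 1) {j : ℕ} (hj : j ≤ n) : g j = 1 := by
  cases j with
  | zero => simpa using h 0 hj
  | succ j =>
    have hsucc := h (j + 1) hj
    rwa [prod_range_succ, h j (by omega), one_mul] at hsucc

theorem Complex.eq_of_mul_conj_eq_one {x y : ℂ} (hy : ‖y‖ = 1) (h : x * conj y = 1) : x = y := by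
  have hyy : y * conj y = 1 := by rw [Complex.mul_conj', hy]; norm_num
  calc x = x * (y * conj y) := by rw [hyy, mul_one]
    _ = x * conj y * y := by ring
    _ = y := by rw [h, one_mul]

theorem omega_isPrimitiveRoot : IsPrimitiveRoot ω 3 := by
  rw [ω]
  exact_mod_cast Complex.isPrimitiveRoot_exp 3 (by norm_num)

theorem omega_ne_zero : ω ≠ 0 := Complex.exp_ne_zero _

theorem omega_ne_one : ω ≠ 1 := omega_isPrimitiveRoot.ne_one (by norm_num)

theorem omega_sq_ne_one : ω ^ 2 ≠ 1 :=
  omega_isPrimitiveRoot.pow_ne_one_of_pos_of_lt two_ne_zero (by norm_num)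

theorem omega_sq_ne_omega : ω ^ 2 ≠ ω := by
  rw [pow_two, Ne, mul_eq_left₀ omega_ne_zero]
  exact omega_ne_one

theorem omega_sq_eq_inv : ω ^ 2 = ω⁻¹ :=
  eq_inv_of_mul_eq_one_left (by rw [← pow_succ, omega_isPrimitiveRoot.pow_eq_one])

theorem omega_sq_eq_neg_one_sub_omega : ω ^ 2 = -1 - ω := by
  have hsum : 1 + ω + ω ^ 2 = 0 := by
    simpa [sum_range_succ] using omega_isPrimitiveRoot.geom_sum_eq_zero (by norm_num)
  linear_combination hsum

theorem omega_im_ne_zero : ω.im ≠ 0 := by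
  have hsin : 0 < Real.sin (2 * Real.pi / 3) :=
    Real.sin_pos_of_pos_of_lt_pi (by positivity) (by linarith [Real.pi_pos])
  simpa [ω, Complex.exp_im] using hsin.ne'

theorem mem_cubeRoots_iff {x : ℂ} : x ∈ ({1, ω, ω ^ 2} : Set ℂ) ↔ x ^ 3 = 1 := by
  constructor
  · rintro (rfl | rfl | rfl)
    · exact one_pow 3
    · exact omega_isPrimitiveRoot.pow_eq_one
    · rw [← pow_mul, mul_comm, pow_mul, omega_isPrimitiveRoot.pow_eq_one, one_pow]
  · intro hx
    obtain ⟨e, he, rfl⟩ := omega_isPrimitiveRoot.eq_pow_of_pow_eq_one hx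
    interval_cases e <;> simp

/-- The exponent `-1` rather than `2` for `ω²` makes `Im x = cubeRootExp x · Im ω`. -/
noncomputable def cubeRootExp (x : ℂ) : ℤ := if x = 1 then 0 else if x = ω then 1 else -1

theorem omega_zpow_cubeRootExp {x : ℂ} (hx : x ^ 3 = 1) : ω ^ cubeRootExp x = x := by
  rcases mem_cubeRoots_iff.2 hx with rfl | rfl | rfl
  · simp [cubeRootExp]
  · simp [cubeRootExp, omega_ne_one]
  · rw [cubeRootExp, if_neg omega_sq_ne_one, if_neg omega_sq_ne_omega, zpow_neg_one,
      omega_sq_eq_inv]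

theorem im_eq_cubeRootExp_mul_im {x : ℂ} (hx : x ^ 3 = 1) : x.im = cubeRootExp x * ω.im := by
  rcases mem_cubeRoots_iff.2 hx with rfl | rfl | rfl
  · simp [cubeRootExp]
  · simp [cubeRootExp, omega_ne_one]
  · rw [cubeRootExp, if_neg omega_sq_ne_one, if_neg omega_sq_ne_omega,
      omega_sq_eq_neg_one_sub_omega]
    simp

theorem prod_cubeRoots_eq_one_of_sum_eq_zero {ι : Type*} {s : Finset ι} {t : ι → ℂ}
    (ht : ∀ i ∈ s, t i ^ 3 = 1) (hsum : ∑ i ∈ s, t i = 0) : ∏ i ∈ s, t i = 1 := by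
  have him : (∑ i ∈ s, cubeRootExp (t i) : ℝ) * ω.im = 0 := by
    rw [sum_mul, ← sum_congr rfl fun i hi => im_eq_cubeRootExp_mul_im (ht i hi), ← Complex.im_sum,
      hsum, Complex.zero_im]
  have hexp : ∑ i ∈ s, cubeRootExp (t i) = 0 := by
    exact_mod_cast (mul_eq_zero.1 him).resolve_right omega_im_ne_zero
  calc ∏ i ∈ s, t i = ∏ i ∈ s, ω ^ cubeRootExp (t i) :=
        prod_congr rfl fun i hi => (omega_zpow_cubeRootExp (ht i hi)).symm
    _ = 1 := by rw [prod_zpow_eq_zpow_sum omega_ne_zero, hexp, zpow_zero]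

section Sequences

variable {s : ℕ} {A B C : ℤ → ℂ}

theorem IsLenSeq.aperCorr_eq_sum (hA : IsLenSeq s A) (u : ℕ) :
    aperCorr A u = ∑ k ∈ range (s - u), A k * conj (A (k + u)) := by
  rw [aperCorr, tsum_eq_sum (s := (range (s - u)).map Nat.castEmbedding), sum_map]
  · rfl
  intro i hi
  rcases lt_or_ge i 0 with hneg | hnonneg
  · rw [hA i (Or.inl hneg), zero_mul]
  · lift i to ℕ using hnonneg
    have hsi : s ≤ i + u := by simpa using hi
    rw [hA (i + u) (Or.inr (by omega)), map_zero, mul_zero]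

theorem IsThreePhaseSeq.pow_three_eq_one (hA : IsThreePhaseSeq s A) {i : ℤ} (h0 : 0 ≤ i)
    (hs : i < s) : A i ^ 3 = 1 :=
  mem_cubeRoots_iff.1 (hA.2 i h0 hs)

def triadProd (A B C : ℤ → ℂ) (i : ℤ) : ℂ := A i * B i * C i

theorem GolaySeqTriad.triadProd_pow_three_eq_one (h : GolaySeqTriad s A B C) {i : ℤ} (h0 : 0 ≤ i)
    (hs : i < s) : triadProd A B C i ^ 3 = 1 := by
  rw [triadProd, mul_pow, mul_pow, h.1.pow_three_eq_one h0 hs, h.2.1.pow_three_eq_one h0 hs,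
    h.2.2.1.pow_three_eq_one h0 hs, one_mul, one_mul]

/-- The `3 (s - u)` terms of `C_A(u) + C_B(u) + C_C(u)` are cube roots of unity summing to `0`. -/
theorem GolaySeqTriad.prod_triadProd_mul_conj_eq_one (h : GolaySeqTriad s A B C) {u : ℕ}
    (hu : 0 < u) :
    ∏ k ∈ range (s - u), triadProd A B C k * conj (triadProd A B C (k + u)) = 1 := by
  obtain ⟨hA, hB, hC, hcorr⟩ := h
  let X : Fin 3 → ℤ → ℂ := ![A, B, C]
  have hX : ∀ c, IsThreePhaseSeq s (X c) := by
    intro c; fin_cases c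
    exacts [hA, hB, hC]
  let t : Fin 3 × ℕ → ℂ := fun p => X p.1 p.2 * conj (X p.1 (p.2 + u))
  have hsum : ∑ p ∈ univ ×ˢ range (s - u), t p = 0 := by
    simp only [sum_product, Fin.sum_univ_three, t, X, Matrix.cons_val_zero, Matrix.cons_val_one,
      Matrix.cons_val_two, Matrix.head_cons, Matrix.tail_cons]
    rw [← hA.1.aperCorr_eq_sum, ← hB.1.aperCorr_eq_sum, ← hC.1.aperCorr_eq_sum]
    exact hcorr u (by omega)
  have ht : ∀ p ∈ univ ×ˢ range (s - u), t p ^ 3 = 1 := by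
    rintro ⟨c, k⟩ hp
    rw [mem_product, mem_range] at hp
    have hk := (hX c).pow_three_eq_one (i := k) (by omega) (by omega)
    have hku := (hX c).pow_three_eq_one (i := k + u) (by omega) (by omega)
    simp only [t, mul_pow, ← map_pow, hk, hku, map_one, mul_one]
  have hprod := prod_cubeRoots_eq_one_of_sum_eq_zero ht hsum
  rw [prod_product, Fin.prod_univ_three, ← prod_mul_distrib, ← prod_mul_distrib] at hprod
  rw [← hprod]
  refine prod_congr rfl fun k _ => ?_
  simp only [triadProd, X, t, map_mul, Matrix.cons_val_zero, Matrix.cons_val_one,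
    Matrix.cons_val_two, Matrix.head_cons, Matrix.tail_cons]
  ring

theorem GolaySeqTriad.prod_triadProd_mul_conj_reflect_eq_one (h : GolaySeqTriad s A B C)
    {j : ℕ} (hj : j + 1 < s) :
    ∏ k ∈ range (j + 1), triadProd A B C k * conj (triadProd A B C (s - 1 - k)) = 1 := by
  have hshift := h.prod_triadProd_mul_conj_eq_one (u := s - 1 - j) (by omega)
  rw [show s - (s - 1 - j) = j + 1 by omega] at hshift
  have hreflect : ∏ k ∈ range (j + 1), conj (triadProd A B C (s - 1 - k)) =
      ∏ k ∈ range (j + 1), conj (triadProd A B C (k + (s - 1 - j : ℕ))) := by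
    rw [← prod_range_reflect _ (j + 1)]
    refine prod_congr rfl fun k hk => ?_
    rw [mem_range] at hk
    congr 3
    omega
  rwa [prod_mul_distrib, hreflect, ← prod_mul_distrib]

theorem GolaySeqTriad.triadProd_eq_reflect_of_succ_lt (h : GolaySeqTriad s A B C) {j : ℕ}
    (hj : j + 1 < s) : triadProd A B C j = triadProd A B C (s - 1 - j) := by
  have hnorm : ‖triadProd A B C (s - 1 - j)‖ = 1 :=
    Complex.norm_eq_one_of_pow_eq_one (h.triadProd_pow_three_eq_one (by omega) (by omega))
      three_ne_zero
  refine Complex.eq_of_mul_conj_eq_one hnorm ?_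
  exact eq_one_of_prod_range_succ_eq_one (n := s - 2)
    (fun j hj => h.prod_triadProd_mul_conj_reflect_eq_one (by omega)) (by omega)

theorem GolaySeqTriad.triadProd_eq_reflect (h : GolaySeqTriad s A B C) {j : ℕ} (hj : j < s) :
    triadProd A B C j = triadProd A B C (s - 1 - j) := by
  rcases Nat.lt_or_ge (j + 1) s with hlt | hge
  · exact h.triadProd_eq_reflect_of_succ_lt hlt
  rcases Nat.eq_zero_or_pos j with rfl | hpos
  · congr 1; omega
  · convert (h.triadProd_eq_reflect_of_succ_lt (j := 0) (by omega)).symm using 2 <;> omega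

end Sequences

/-- If `A, B, C` form a 3-phase length-`s` Golay sequence triad, then
`A(i)B(i)C(i) = A(s−1−i)B(s−1−i)C(s−1−i)` for `0 ≤ i < s`. -/
theorem golay_triad_product_symmetry (s : ℕ) (A B C : ℤ → ℂ)
    (h : GolaySeqTriad s A B C) (i : ℤ) (hi0 : 0 ≤ i) (his : i < (s : ℤ)) :
    A i * B i * C i =
      A ((s : ℤ) - 1 - i) * B ((s : ℤ) - 1 - i) * C ((s : ℤ) - 1 - i) := by
  lift i to ℕ using hi0
  exact h.triadProd_eq_reflect (by exact_mod_cast his)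
end

section
/- Let A be a length 2n sequence of complex numbers. Then |Σ_{i=0}^{2n−1} (−1)^i A(i)|² = Σ_{u=0}^{2n−1} (−1)^u R_A(u), where R_A is the periodic autocorrelation function of A. -/
open scoped BigOperators

/-- Periodic autocorrelation function
`R_A(u) = Σ_{i=0}^{s−1} A(i) conj(A((i+u) mod s))`. -/
noncomputable def perCorr (s : ℕ) (A : ℤ → ℂ) (u : ℤ) : ℂ :=
  ∑ i ∈ Finset.range s, A i * (starRingEnd ℂ) (A (((i : ℤ) + u) % (s : ℤ)))

/-- Three 3-phase length-`s` sequences forming a 3-phase periodic Golay sequence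
triad. -/
def PeriodicGolaySeqTriad (s : ℕ) (A B C : ℤ → ℂ) : Prop :=
  IsThreePhaseSeq s A ∧ IsThreePhaseSeq s B ∧ IsThreePhaseSeq s C ∧
    ∀ u : ℤ, 0 < u → u < (s : ℤ) →
      perCorr s A u + perCorr s B u + perCorr s C u = 0

/-! Since `2n` is even, `-1` is a `2n`-th root of unity, and the identity is the case `ζ = -1` of
the periodic Wiener–Khinchin identity `|Σ_i ζ^i A(i)|² = Σ_u conj(ζ)^u R_A(u)` for `ζ^s = 1`.
That identity holds because `|ζ| = 1` and the cyclic shift does not change a sum over a full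
period: `Σ_u ζ^u A((i+u) mod s) = conj(ζ)^i Σ_j ζ^j A(j)`. -/

open Finset ComplexConjugate

theorem Function.Periodic.sum_range_add {M : Type*} [AddCommMonoid M] {f : ℕ → M} {s : ℕ}
    (hf : Function.Periodic f s) (i : ℕ) :
    ∑ u ∈ range s, f (i + u) = ∑ u ∈ range s, f u := by
  induction i with
  | zero => simp
  | succ i ih =>
    rw [← ih]
    rcases s with _ | s
    · simp
    rw [sum_range_succ, sum_range_succ' (fun u => f (i + u)), add_zero,
      add_right_comm i 1 s, add_assoc i s 1, hf i]
    simp only [add_assoc, add_comm 1]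

lemma perCorr_natCast (s : ℕ) (A : ℤ → ℂ) (u : ℕ) :
    perCorr s A u = ∑ i ∈ range s, A i * conj (A ((i + u) % s : ℕ)) := by
  simp only [perCorr, Nat.cast_add, Int.natCast_mod]

lemma sum_range_pow_mul_shift_mod {ζ : ℂ} {s : ℕ} (hζ : ζ ^ s = 1) (hs : s ≠ 0) (A : ℤ → ℂ)
    (i : ℕ) :
    ∑ u ∈ range s, ζ ^ u * A ((i + u) % s : ℕ) = conj ζ ^ i * ∑ j ∈ range s, ζ ^ j * A j := by
  have hconj_mul : conj ζ * ζ = 1 := by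
    rw [mul_comm, Complex.mul_conj, Complex.normSq_eq_norm_sq,
      Complex.norm_eq_one_of_pow_eq_one hζ hs]
    norm_num
  have hf : Function.Periodic (fun k : ℕ => ζ ^ k * A (k % s : ℕ)) s := fun k => by
    simp only [pow_add, hζ, mul_one, Nat.add_mod_right]
  calc ∑ u ∈ range s, ζ ^ u * A ((i + u) % s : ℕ)
      = conj ζ ^ i * ∑ u ∈ range s, ζ ^ (i + u) * A ((i + u) % s : ℕ) := by
        rw [mul_sum]
        refine sum_congr rfl fun u _ => ?_
        rw [pow_add, ← mul_assoc, ← mul_assoc, ← mul_pow, hconj_mul, one_pow, one_mul]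
    _ = conj ζ ^ i * ∑ j ∈ range s, ζ ^ j * A j := by
        rw [hf.sum_range_add i]
        refine congrArg _ (sum_congr rfl fun j hj => ?_)
        rw [Nat.mod_eq_of_lt (mem_range.mp hj)]

theorem norm_sum_pow_mul_sq_eq_sum_conj_pow_mul_perCorr {ζ : ℂ} {s : ℕ} (hζ : ζ ^ s = 1)
    (A : ℤ → ℂ) :
    ((‖∑ i ∈ range s, ζ ^ i * A i‖ ^ 2 : ℝ) : ℂ) =
      ∑ u ∈ range s, conj ζ ^ u * perCorr s A u := by
  rcases eq_or_ne s 0 with rfl | hs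
  · simp
  set S := ∑ j ∈ range s, ζ ^ j * A j with hS
  calc ((‖S‖ ^ 2 : ℝ) : ℂ) = S * conj S := by rw [Complex.mul_conj, Complex.normSq_eq_norm_sq]
    _ = ∑ i ∈ range s, A i * conj (conj ζ ^ i * S) := by
        show (∑ j ∈ range s, ζ ^ j * A j) * conj S = _
        rw [sum_mul]
        refine sum_congr rfl fun i _ => ?_
        rw [map_mul, map_pow, Complex.conj_conj]
        ring
    _ = ∑ i ∈ range s, A i * conj (∑ u ∈ range s, ζ ^ u * A ((i + u) % s : ℕ)) := by
        simp only [sum_range_pow_mul_shift_mod hζ hs, ← hS]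
    _ = ∑ u ∈ range s, conj ζ ^ u * perCorr s A u := by
        simp only [perCorr_natCast, map_sum, map_mul, map_pow, mul_sum]
        rw [sum_comm]
        exact sum_congr rfl fun u _ => sum_congr rfl fun i _ => by ring

theorem alternating_sum_abs_sq_eq_alternating_perCorr_sum_general (n : ℕ) (A : ℤ → ℂ) :
    ((‖∑ i ∈ Finset.range (2 * n), (-1 : ℂ) ^ i * A i‖ ^ 2 : ℝ) : ℂ) =
      ∑ u ∈ Finset.range (2 * n), (-1 : ℂ) ^ u * perCorr (2 * n) A u := by
  have h := norm_sum_pow_mul_sq_eq_sum_conj_pow_mul_perCorr (s := 2 * n)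
    (by rw [pow_mul]; norm_num : (-1 : ℂ) ^ (2 * n) = 1) A
  simpa only [map_neg, map_one] using h

/-- For a length-`2n` sequence `A`,
`|Σ_{i=0}^{2n−1} (−1)^i A(i)|² = Σ_{u=0}^{2n−1} (−1)^u R_A(u)`. -/
theorem alternating_sum_abs_sq_eq_alternating_perCorr_sum (n : ℕ) (A : ℤ → ℂ)
    (hA : IsLenSeq (2 * n) A) :
    ((‖∑ i ∈ Finset.range (2 * n), (-1 : ℂ) ^ i * A i‖ ^ 2 : ℝ) : ℂ) =
      ∑ u ∈ Finset.range (2 * n), (-1 : ℂ) ^ u * perCorr (2 * n) A u :=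
  alternating_sum_abs_sq_eq_alternating_perCorr_sum_general n A
end

section
/- Suppose that A, B, C form a 3-phase length s Golay sequence triad with s ≥ 2 and A(0) = B(0) = C(0) = 1 (normalised form). Then the values A(s−1), B(s−1), C(s−1) are exactly the three cube roots of unity 1, ω, ω²; that is, {A(s−1), B(s−1), C(s−1)} = {1, ω, ω²}. -/
open scoped BigOperators

/-!
At shift `s - 1` only the product of the first and last entries survives in an aperiodic
autocorrelation, so in a normalised triad the Golay condition at `u = s - 1` says that the
last entries `a, b, c` sum to zero. They are unimodular, and if two of them coincided, say
`a = b`, then `c = -2a` would have modulus `2`. Hence `a, b, c` are three distinct elements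
of `{1, ω, ω²}`.
-/

open ComplexConjugate

lemma norm_omega : ‖ω‖ = 1 := by
  simp [ω, Complex.norm_exp]

lemma norm_eq_one_of_mem_cubeRoots {x : ℂ} (hx : x ∈ ({1, ω, ω ^ 2} : Set ℂ)) : ‖x‖ = 1 := by
  rcases hx with rfl | rfl | rfl <;> simp [norm_omega]

lemma IsThreePhaseSeq.apply_sub_one_mem {s : ℕ} {A : ℤ → ℂ} (hA : IsThreePhaseSeq s A)
    (hs : 0 < s) : A ((s : ℤ) - 1) ∈ ({1, ω, ω ^ 2} : Set ℂ) :=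
  hA.2 _ (by omega) (by omega)

lemma IsLenSeq.aperCorr_sub_one {s : ℕ} {A : ℤ → ℂ} (hA : IsLenSeq s A) :
    aperCorr A ((s : ℤ) - 1) = A 0 * conj (A ((s : ℤ) - 1)) := by
  rw [aperCorr, tsum_eq_single 0 fun i hi => ?_, zero_add]
  rcases lt_or_gt_of_ne hi with hneg | hpos
  · rw [hA i (Or.inl hneg), zero_mul]
  · rw [hA (i + ((s : ℤ) - 1)) (Or.inr (by omega)), map_zero, mul_zero]

lemma ne_of_add_add_eq_zero {x y z : ℂ} (hx : ‖x‖ = 1) (hz : ‖z‖ = 1) (h : x + y + z = 0) :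
    x ≠ y := by
  rintro rfl
  have hz' : z = -(2 * x) := by linear_combination h
  have : ‖z‖ = 2 * ‖x‖ := by simp [hz']
  rw [hx, hz] at this
  norm_num at this

lemma Set.insert_insert_singleton_eq_of_ne {α : Type*} {a b c x y z : α}
    (ha : a ∈ ({x, y, z} : Set α)) (hb : b ∈ ({x, y, z} : Set α)) (hc : c ∈ ({x, y, z} : Set α))
    (hab : a ≠ b) (hac : a ≠ c) (hbc : b ≠ c) : ({a, b, c} : Set α) = {x, y, z} := by
  refine Set.eq_of_subset_of_ncard_le (by simp [Set.insert_subset_iff, ha, hb, hc]) ?_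
    (Set.toFinite _)
  calc ({x, y, z} : Set α).ncard ≤ ({y, z} : Set α).ncard + 1 := Set.ncard_insert_le _ _
    _ ≤ ({z} : Set α).ncard + 1 + 1 := by gcongr; exact Set.ncard_insert_le _ _
    _ = 3 := by rw [Set.ncard_singleton]
    _ = ({a, b, c} : Set α).ncard := (Set.ncard_eq_three.2 ⟨a, b, c, hab, hac, hbc, rfl⟩).symm

/-- For a normalised 3-phase length-`s` Golay sequence triad (`s ≥ 2`,
`A(0) = B(0) = C(0) = 1`), the values `A(s−1), B(s−1), C(s−1)` are exactly the
three cube roots of unity. -/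
theorem normalised_golay_triad_last_entries (s : ℕ) (hs : 2 ≤ s) (A B C : ℤ → ℂ)
    (h : GolaySeqTriad s A B C) (hA0 : A 0 = 1) (hB0 : B 0 = 1) (hC0 : C 0 = 1) :
    ({A ((s : ℤ) - 1), B ((s : ℤ) - 1), C ((s : ℤ) - 1)} : Set ℂ) =
      ({1, ω, ω ^ 2} : Set ℂ) := by
  obtain ⟨hA, hB, hC, hcorr⟩ := h
  have ha := hA.apply_sub_one_mem (by omega)
  have hb := hB.apply_sub_one_mem (by omega)
  have hc := hC.apply_sub_one_mem (by omega)
  have hsum : A ((s : ℤ) - 1) + B ((s : ℤ) - 1) + C ((s : ℤ) - 1) = 0 := by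
    have hlast := hcorr ((s : ℤ) - 1) (by omega)
    rw [hA.1.aperCorr_sub_one, hB.1.aperCorr_sub_one, hC.1.aperCorr_sub_one, hA0, hB0, hC0]
      at hlast
    simpa using congrArg conj hlast
  have hna := norm_eq_one_of_mem_cubeRoots ha
  have hnb := norm_eq_one_of_mem_cubeRoots hb
  have hnc := norm_eq_one_of_mem_cubeRoots hc
  exact Set.insert_insert_singleton_eq_of_ne ha hb hc
    (ne_of_add_add_eq_zero hna hnc hsum)
    (ne_of_add_add_eq_zero hna hnb (by linear_combination hsum))
    (ne_of_add_add_eq_zero hnb hna (by linear_combination hsum))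
end

section
/- (Linear Offsets for sequence triads.) Suppose that (a_i), (b_i), (c_i) form a length s Golay sequence triad over ℤ₃, and let e ∈ ℤ₃. Then the sequences (a_i + e·i), (b_i + e·i), (c_i + e·i) over ℤ₃ also form a length s Golay sequence triad over ℤ₃. -/
open scoped BigOperators

/-- The 3-phase length-`s` sequence corresponding to a length-`s` sequence over
`ℤ₃`: `A(i) = ω^{a(i)}` for `0 ≤ i < s`, and `A(i) = 0` otherwise. -/
noncomputable def toSeq (s : ℕ) (a : ℤ → ZMod 3) : ℤ → ℂ :=
  fun i => if 0 ≤ i ∧ i < (s : ℤ) then ω ^ (a i).val else 0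

/-- Three length-`s` sequences over `ℤ₃` forming a length-`s` Golay sequence
triad over `ℤ₃`: their corresponding 3-phase sequences satisfy
`C_A(u) + C_B(u) + C_C(u) = 0` for all `u ≠ 0`. -/
def GolayTriadZ3 (s : ℕ) (a b c : ℤ → ZMod 3) : Prop :=
  ∀ u : ℤ, u ≠ 0 →
    aperCorr (toSeq s a) u + aperCorr (toSeq s b) u + aperCorr (toSeq s c) u = 0

/-!
Adding `e·i` to a ℤ₃-sequence multiplies its 3-phase sequence pointwise by the additive character
`χ(i) = ω^{e·i}` of ℤ. Since `χ(i) · conj χ(i + u) = conj χ(u)`, every aperiodic autocorrelation at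
shift `u` gets multiplied by the same unimodular factor `conj χ(u)`, so the vanishing of their sum
is preserved.
-/

open ComplexConjugate

theorem aperCorr_addChar_mul (ψ : AddChar ℤ Circle) (A : ℤ → ℂ) (u : ℤ) :
    aperCorr (fun i => (ψ i : ℂ) * A i) u = conj (ψ u : ℂ) * aperCorr A u := by
  unfold aperCorr
  rw [← tsum_mul_left]
  congr 1 with i
  dsimp only
  have hψ : (ψ i : ℂ) * conj (ψ i : ℂ) = 1 := by
    rw [← Circle.coe_inv_eq_conj, ← Circle.coe_mul, mul_inv_cancel, Circle.coe_one]
  rw [AddChar.map_add_eq_mul, Circle.coe_mul, map_mul, map_mul]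
  linear_combination (conj (ψ u : ℂ) * A i * conj (A (i + u))) * hψ

theorem ω_pow_val (x : ZMod 3) : ω ^ x.val = ZMod.toCircle x := by
  rw [ZMod.toCircle_apply, ω, ← Complex.exp_nat_mul]
  push_cast
  ring_nf

/-- The character `n ↦ exp (2π√-1 · e n / N)` of `ℤ`. -/
noncomputable def linearChar {N : ℕ} [NeZero N] (e : ZMod N) : AddChar ℤ Circle :=
  ZMod.toCircle.compAddMonoidHom ((AddMonoidHom.mulLeft e).comp (Int.castAddHom (ZMod N)))

theorem toSeq_add_linear (s : ℕ) (a : ℤ → ZMod 3) (e : ZMod 3) :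
    toSeq s (fun i => a i + e * (i : ZMod 3)) = fun i => (linearChar e i : ℂ) * toSeq s a i := by
  funext i
  unfold toSeq
  split_ifs
  · rw [ω_pow_val, ω_pow_val, AddChar.map_add_eq_mul, Circle.coe_mul, mul_comm]
    rfl
  · rw [mul_zero]

/-- (Linear Offsets.) If `(a_i), (b_i), (c_i)` form a length-`s` Golay sequence
triad over `ℤ₃` and `e ∈ ℤ₃`, then `(a_i + e·i), (b_i + e·i), (c_i + e·i)`
also form a length-`s` Golay sequence triad over `ℤ₃`. -/
theorem golay_triad_linear_offset (s : ℕ) (a b c : ℤ → ZMod 3)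
    (h : GolayTriadZ3 s a b c) (e : ZMod 3) :
    GolayTriadZ3 s (fun i => a i + e * (i : ZMod 3))
      (fun i => b i + e * (i : ZMod 3)) (fun i => c i + e * (i : ZMod 3)) := by
  intro u hu
  simp only [toSeq_add_linear, aperCorr_addChar_mul]
  rw [← mul_add, ← mul_add, h u hu, mul_zero]
end

section
/- Let A be a 3-phase s₁ × ⋯ × s_r array, where r ≥ 2. Then for all integers u₁, …, u_r with 0 ≤ u₁ < s₁, the aperiodic autocorrelation of the projection ψ_{1,2}(A) satisfies C_{ψ_{1,2}(A)}(u₁ + s₁u₂, u₃, …, u_r) = C_A(u₁, u₂, u₃, …, u_r) + C_A(u₁ − s₁, u₂ + 1, u₃, …, u_r). -/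
open scoped BigOperators

/-- An `s₁ × s₂ × s₃ × ⋯ × s_{r+2}` array (with the first two dimensions
displayed explicitly): vanishes whenever some index is out of range. -/
def IsArr2R (s₁ s₂ : ℕ) {r : ℕ} (s : Fin r → ℕ)
    (A : ℤ → ℤ → (Fin r → ℤ) → ℂ) : Prop :=
  ∀ (i₁ i₂ : ℤ) (i : Fin r → ℤ),
    ((i₁ < 0 ∨ (s₁ : ℤ) ≤ i₁) ∨ (i₂ < 0 ∨ (s₂ : ℤ) ≤ i₂) ∨
      ∃ k, i k < 0 ∨ (s k : ℤ) ≤ i k) → A i₁ i₂ i = 0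

/-- A 3-phase `s₁ × s₂ × s₃ × ⋯ × s_{r+2}` array: entries inside the index
range lie in `{1, ω, ω²}`. -/
def IsThreePhase2R (s₁ s₂ : ℕ) {r : ℕ} (s : Fin r → ℕ)
    (A : ℤ → ℤ → (Fin r → ℤ) → ℂ) : Prop :=
  IsArr2R s₁ s₂ s A ∧
    ∀ (i₁ i₂ : ℤ) (i : Fin r → ℤ), 0 ≤ i₁ → i₁ < (s₁ : ℤ) → 0 ≤ i₂ →
      i₂ < (s₂ : ℤ) → (∀ k, 0 ≤ i k ∧ i k < (s k : ℤ)) →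
      A i₁ i₂ i ∈ ({1, ω, ω ^ 2} : Set ℂ)

/-- Aperiodic autocorrelation of an array with two explicit leading
dimensions. -/
noncomputable def aperCorr2R {r : ℕ} (A : ℤ → ℤ → (Fin r → ℤ) → ℂ)
    (u₁ u₂ : ℤ) (u : Fin r → ℤ) : ℂ :=
  ∑' p : ℤ × ℤ × (Fin r → ℤ),
    A p.1 p.2.1 p.2.2 * (starRingEnd ℂ) (A (p.1 + u₁) (p.2.1 + u₂) (p.2.2 + u))

/-- A `t × s₁ × ⋯ × s_r` array (with the first dimension displayed
explicitly): vanishes whenever some index is out of range. -/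
def IsArr1R (t : ℕ) {r : ℕ} (s : Fin r → ℕ) (B : ℤ → (Fin r → ℤ) → ℂ) : Prop :=
  ∀ (i₀ : ℤ) (i : Fin r → ℤ),
    ((i₀ < 0 ∨ (t : ℤ) ≤ i₀) ∨ ∃ k, i k < 0 ∨ (s k : ℤ) ≤ i k) → B i₀ i = 0

/-- A 3-phase `t × s₁ × ⋯ × s_r` array. -/
def IsThreePhase1R (t : ℕ) {r : ℕ} (s : Fin r → ℕ)
    (B : ℤ → (Fin r → ℤ) → ℂ) : Prop :=
  IsArr1R t s B ∧
    ∀ (i₀ : ℤ) (i : Fin r → ℤ), 0 ≤ i₀ → i₀ < (t : ℤ) →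
      (∀ k, 0 ≤ i k ∧ i k < (s k : ℤ)) → B i₀ i ∈ ({1, ω, ω ^ 2} : Set ℂ)

/-- Aperiodic autocorrelation of an array with one explicit leading
dimension. -/
noncomputable def aperCorr1R {r : ℕ} (B : ℤ → (Fin r → ℤ) → ℂ)
    (u₀ : ℤ) (u : Fin r → ℤ) : ℂ :=
  ∑' p : ℤ × (Fin r → ℤ),
    B p.1 p.2 * (starRingEnd ℂ) (B (p.1 + u₀) (p.2 + u))

/-- Three 3-phase arrays (two explicit leading dimensions) forming a 3-phase
Golay array triad. -/
def GolayTriad2R (s₁ s₂ : ℕ) {r : ℕ} (s : Fin r → ℕ)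
    (A B C : ℤ → ℤ → (Fin r → ℤ) → ℂ) : Prop :=
  IsThreePhase2R s₁ s₂ s A ∧ IsThreePhase2R s₁ s₂ s B ∧ IsThreePhase2R s₁ s₂ s C ∧
    ∀ (u₁ u₂ : ℤ) (u : Fin r → ℤ), ¬ (u₁ = 0 ∧ u₂ = 0 ∧ u = 0) →
      aperCorr2R A u₁ u₂ u + aperCorr2R B u₁ u₂ u + aperCorr2R C u₁ u₂ u = 0

/-- Three 3-phase arrays (one explicit leading dimension) forming a 3-phase
Golay array triad. -/
def GolayTriad1R (t : ℕ) {r : ℕ} (s : Fin r → ℕ)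
    (A B C : ℤ → (Fin r → ℤ) → ℂ) : Prop :=
  IsThreePhase1R t s A ∧ IsThreePhase1R t s B ∧ IsThreePhase1R t s C ∧
    ∀ (u₀ : ℤ) (u : Fin r → ℤ), ¬ (u₀ = 0 ∧ u = 0) →
      aperCorr1R A u₀ u + aperCorr1R B u₀ u + aperCorr1R C u₀ u = 0

/-- The projection `ψ_{1,2}`: joins the first dimension (of size `s₁`) to the
second, via `B(i₁ + s₁ i₂, i) = A(i₁, i₂, i)` for `0 ≤ i₁ < s₁`,
`0 ≤ i₂ < s₂`, and zero outside the index ranges. -/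
noncomputable def proj12 (s₁ s₂ : ℕ) {r : ℕ}
    (A : ℤ → ℤ → (Fin r → ℤ) → ℂ) : ℤ → (Fin r → ℤ) → ℂ :=
  fun j i =>
    if 0 ≤ j ∧ j < (s₁ : ℤ) * (s₂ : ℤ) then A (j % (s₁ : ℤ)) (j / (s₁ : ℤ)) i
    else 0

/-!
Write `j = a + s₁ b` with `0 ≤ a < s₁`. Since `0 ≤ u₁ < s₁`, the shifted index
`j + u₁ + s₁ u₂ = (a + u₁) + s₁ (b + u₂)` has `0 ≤ a + u₁ < 2 s₁`, so the entry of `ψ_{1,2}(A)` there is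
`A(a + u₁, b + u₂, …)` if `a + u₁ < s₁` and `A(a + u₁ - s₁, b + u₂ + 1, …)` otherwise; the other
of the two is zero because it lies outside the array. Hence each term of `C_{ψ_{1,2}(A)}` is
the sum of the corresponding terms of the two autocorrelations of `A`, and `j ↦ (j % s₁, j / s₁)`
matches the summation ranges.
-/

noncomputable def aperCorrTerm2R {r : ℕ} (A : ℤ → ℤ → (Fin r → ℤ) → ℂ)
    (u₁ u₂ : ℤ) (u : Fin r → ℤ) (q : ℤ × ℤ × (Fin r → ℤ)) : ℂ :=
  A q.1 q.2.1 q.2.2 * (starRingEnd ℂ) (A (q.1 + u₁) (q.2.1 + u₂) (q.2.2 + u))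

theorem tsum_comp_emod_ediv {X M : Type*} [AddCommMonoid M] [TopologicalSpace M]
    {n : ℤ} (hn : 0 < n) (g : ℤ × ℤ × X → M)
    (hg : ∀ q, g q ≠ 0 → 0 ≤ q.1 ∧ q.1 < n) :
    ∑' p : ℤ × X, g (p.1 % n, p.1 / n, p.2) = ∑' q, g q := by
  refine Function.Injective.tsum_eq (g := fun p : ℤ × X => (p.1 % n, p.1 / n, p.2)) ?_ ?_
  · rintro ⟨j, x⟩ ⟨j', x'⟩ h
    simp only [Prod.mk.injEq] at h
    obtain ⟨hmod, hdiv, rfl⟩ := h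
    rw [← Int.mul_ediv_add_emod j n, hmod, hdiv, Int.mul_ediv_add_emod]
  · rintro ⟨a, b, x⟩ hq
    obtain ⟨ha0, han⟩ := hg _ hq
    refine ⟨(a + n * b, x), ?_⟩
    simp only [Int.add_mul_emod_self_left, Int.emod_eq_of_lt ha0 han,
      Int.add_mul_ediv_left _ _ hn.ne', Int.ediv_eq_zero_of_lt ha0 han, zero_add]

namespace IsArr2R

variable {s₁ s₂ r : ℕ} {s : Fin r → ℕ} {A : ℤ → ℤ → (Fin r → ℤ) → ℂ}

noncomputable def box (s₁ s₂ : ℕ) {r : ℕ} (s : Fin r → ℕ) : Finset (ℤ × ℤ × (Fin r → ℤ)) :=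
  Finset.Ico 0 (s₁ : ℤ) ×ˢ Finset.Ico 0 (s₂ : ℤ) ×ˢ
    Fintype.piFinset fun k => Finset.Ico 0 (s k : ℤ)

theorem apply_eq_zero_of_notMem_box (hA : IsArr2R s₁ s₂ s A)
    {q : ℤ × ℤ × (Fin r → ℤ)} (hq : q ∉ box s₁ s₂ s) : A q.1 q.2.1 q.2.2 = 0 := by
  apply hA
  contrapose! hq
  obtain ⟨⟨h₁, h₁'⟩, ⟨h₂, h₂'⟩, h⟩ := hq
  simpa [box, h₁, h₁', h₂, h₂'] using h

theorem aperCorrTerm2R_eq_zero_of_notMem_box (hA : IsArr2R s₁ s₂ s A)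
    (v₁ v₂ : ℤ) (v : Fin r → ℤ) {q : ℤ × ℤ × (Fin r → ℤ)} (hq : q ∉ box s₁ s₂ s) :
    aperCorrTerm2R A v₁ v₂ v q = 0 := by
  rw [aperCorrTerm2R, hA.apply_eq_zero_of_notMem_box hq, zero_mul]

theorem summable_aperCorrTerm2R (hA : IsArr2R s₁ s₂ s A) (v₁ v₂ : ℤ) (v : Fin r → ℤ) :
    Summable (aperCorrTerm2R A v₁ v₂ v) :=
  summable_of_ne_finset_zero fun _ => hA.aperCorrTerm2R_eq_zero_of_notMem_box v₁ v₂ v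

theorem proj12_apply (hA : IsArr2R s₁ s₂ s A) (j : ℤ) (i : Fin r → ℤ) :
    proj12 s₁ s₂ A j i = A (j % s₁) (j / s₁) i := by
  unfold proj12
  split_ifs with h
  · rfl
  refine (hA _ _ _ ?_).symm
  rcases Nat.eq_zero_or_pos s₁ with h0 | hpos
  · subst h0
    simp only [Nat.cast_zero, Int.emod_zero]
    omega
  · rcases not_and_or.mp h with hneg | hbig
    · exact Or.inr (Or.inl (Or.inl (Int.ediv_neg_of_neg_of_pos (by omega) (by omega))))
    · refine Or.inr (Or.inl (Or.inr ?_))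
      rw [Int.le_ediv_iff_mul_le (by omega)]
      linarith

/-- At most one term on the right is nonzero: `c` lies either in block `b` or in block `b + 1`. -/
theorem proj12_add_mul (hA : IsArr2R s₁ s₂ s A) {c : ℤ} (hc₀ : 0 ≤ c) (hc : c < 2 * s₁)
    (b : ℤ) (i : Fin r → ℤ) :
    proj12 s₁ s₂ A (c + s₁ * b) i = A c b i + A (c - s₁) (b + 1) i := by
  have hs₁ : (s₁ : ℤ) ≠ 0 := by omega
  rw [hA.proj12_apply]
  rcases lt_or_ge c s₁ with hlt | hge
  · rw [Int.add_mul_emod_self_left, Int.emod_eq_of_lt hc₀ hlt, Int.add_mul_ediv_left _ _ hs₁,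
      Int.ediv_eq_zero_of_lt hc₀ hlt, zero_add,
      hA (c - s₁) (b + 1) i (Or.inl (Or.inl (by omega))), add_zero]
  · have hc' : c + s₁ * b = (c - s₁) + s₁ * (b + 1) := by ring
    rw [hc', Int.add_mul_emod_self_left, Int.emod_eq_of_lt (by omega) (by omega),
      Int.add_mul_ediv_left _ _ hs₁, Int.ediv_eq_zero_of_lt (by omega) (by omega), zero_add,
      hA c b i (Or.inl (Or.inr hge)), zero_add]

theorem proj12_mul_conj_proj12 (hA : IsArr2R s₁ s₂ s A) {u₁ : ℤ} (hu₁0 : 0 ≤ u₁)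
    (hu₁s : u₁ < s₁) (u₂ : ℤ) (u : Fin r → ℤ) (j : ℤ) (i : Fin r → ℤ) :
    proj12 s₁ s₂ A j i * (starRingEnd ℂ) (proj12 s₁ s₂ A (j + (u₁ + s₁ * u₂)) (i + u)) =
      aperCorrTerm2R A u₁ u₂ u (j % s₁, j / s₁, i) +
        aperCorrTerm2R A (u₁ - s₁) (u₂ + 1) u (j % s₁, j / s₁, i) := by
  have hs₁ : (0 : ℤ) < s₁ := by omega
  have hj : j + (u₁ + s₁ * u₂) = (j % s₁ + u₁) + s₁ * (j / s₁ + u₂) := by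
    linear_combination (Int.mul_ediv_add_emod j s₁).symm
  rw [hj, hA.proj12_apply, hA.proj12_add_mul (by linarith [Int.emod_nonneg j hs₁.ne'])
    (by linarith [Int.emod_lt_of_pos j hs₁]), map_add, mul_add, aperCorrTerm2R, aperCorrTerm2R,
    add_sub_assoc, add_assoc (j / s₁)]

end IsArr2R

/-- For a 3-phase array `A` (with at least two dimensions) and `0 ≤ u₁ < s₁`,
`C_{ψ₁,₂(A)}(u₁ + s₁u₂, u₃, …) = C_A(u₁, u₂, u₃, …) + C_A(u₁ − s₁, u₂ + 1, u₃, …)`. -/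
theorem proj12_aperCorr (s₁ s₂ : ℕ) (r : ℕ) (s : Fin r → ℕ)
    (A : ℤ → ℤ → (Fin r → ℤ) → ℂ) (hA : IsThreePhase2R s₁ s₂ s A)
    (u₁ : ℤ) (hu₁0 : 0 ≤ u₁) (hu₁s : u₁ < (s₁ : ℤ)) (u₂ : ℤ) (u : Fin r → ℤ) :
    aperCorr1R (proj12 s₁ s₂ A) (u₁ + (s₁ : ℤ) * u₂) u =
      aperCorr2R A u₁ u₂ u + aperCorr2R A (u₁ - (s₁ : ℤ)) (u₂ + 1) u := by
  have hArr := hA.1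
  have hs₁ : (0 : ℤ) < s₁ := by omega
  have hsupp : ∀ q, aperCorrTerm2R A u₁ u₂ u q + aperCorrTerm2R A (u₁ - s₁) (u₂ + 1) u q ≠ 0 →
      0 ≤ q.1 ∧ q.1 < s₁ := by
    intro q hq
    have hbox : q ∈ IsArr2R.box s₁ s₂ s := by
      contrapose! hq
      rw [hArr.aperCorrTerm2R_eq_zero_of_notMem_box _ _ _ hq,
        hArr.aperCorrTerm2R_eq_zero_of_notMem_box _ _ _ hq, add_zero]
    exact Finset.mem_Ico.mp (Finset.mem_product.mp hbox).1
  calc aperCorr1R (proj12 s₁ s₂ A) (u₁ + s₁ * u₂) u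
      = ∑' p : ℤ × (Fin r → ℤ), (aperCorrTerm2R A u₁ u₂ u (p.1 % s₁, p.1 / s₁, p.2) +
          aperCorrTerm2R A (u₁ - s₁) (u₂ + 1) u (p.1 % s₁, p.1 / s₁, p.2)) :=
        tsum_congr fun p => hArr.proj12_mul_conj_proj12 hu₁0 hu₁s u₂ u p.1 p.2
    _ = ∑' q, (aperCorrTerm2R A u₁ u₂ u q + aperCorrTerm2R A (u₁ - s₁) (u₂ + 1) u q) :=
        tsum_comp_emod_ediv hs₁ _ hsupp
    _ = aperCorr2R A u₁ u₂ u + aperCorr2R A (u₁ - s₁) (u₂ + 1) u :=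
        (hArr.summable_aperCorrTerm2R _ _ _).tsum_add (hArr.summable_aperCorrTerm2R _ _ _)
end

section
/- Suppose there exists a 3-phase s₁ × ⋯ × s_r Golay array triad. Then there exists a 3-phase Golay sequence triad of length ∏_{k=1}^{r} s_k. -/
open scoped BigOperators

/-- Aperiodic autocorrelation function of an `r`-dimensional array:
`C_A(u) = Σ_{i ∈ ℤ^r} A(i) conj(A(i+u))`. -/
noncomputable def aperCorrArr {r : ℕ} (A : (Fin r → ℤ) → ℂ) (u : Fin r → ℤ) : ℂ :=
  ∑' i : Fin r → ℤ, A i * (starRingEnd ℂ) (A (i + u))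

/-- A 3-phase `s₁ × ⋯ × s_r` array: vanishes whenever some index is out of
range, and its entries inside the index range lie in `{1, ω, ω²}`. -/
def IsThreePhaseArr (r : ℕ) (s : Fin r → ℕ) (A : (Fin r → ℤ) → ℂ) : Prop :=
  (∀ i : Fin r → ℤ, (∃ k, i k < 0 ∨ (s k : ℤ) ≤ i k) → A i = 0) ∧
    ∀ i : Fin r → ℤ, (∀ k, 0 ≤ i k ∧ i k < (s k : ℤ)) →
      A i ∈ ({1, ω, ω ^ 2} : Set ℂ)

/-- Three 3-phase `s₁ × ⋯ × s_r` arrays forming a 3-phase Golay array triad. -/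
def GolayArrTriad (r : ℕ) (s : Fin r → ℕ) (A B C : (Fin r → ℤ) → ℂ) : Prop :=
  IsThreePhaseArr r s A ∧ IsThreePhaseArr r s B ∧ IsThreePhaseArr r s C ∧
    ∀ u : Fin r → ℤ, u ≠ 0 →
      aperCorrArr A u + aperCorrArr B u + aperCorrArr C u = 0

/-!
Flatten each array along the mixed-radix map `φ(i) = ∑ₖ iₖ ∏_{j<k} s_j`. It is additive and maps
the index box bijectively onto `[0, ∏ₖ sₖ)`, so the flattened sequences are again 3-phase, and by
additivity the autocorrelation of a flattened sequence at `u` is the sum of the array's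
autocorrelations at all shifts `v` with `φ v = u`. For `u ≠ 0` every such `v` is nonzero, so the
three sums cancel term by term.
-/

open Finset
open scoped Pointwise ComplexConjugate

section Pushforward

variable {G H : Type*} [AddCommGroup G] [AddCommGroup H]

/-- `aperCorr` and `aperCorrArr` are, definitionally, the cases `G = ℤ` and `G = Fin r → ℤ`. -/
noncomputable def autocorr (A : G → ℂ) (u : G) : ℂ :=
  ∑' i, A i * conj (A (i + u))

lemma autocorr_eq_sum {A : G → ℂ} {S : Finset G} (hA : ∀ i ∉ S, A i = 0) (u : G) :
    autocorr A u = ∑ i ∈ S, A i * conj (A (i + u)) :=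
  tsum_eq_sum fun i hi => by rw [hA i hi, zero_mul]

variable [DecidableEq H] (φ : G →+ H) (S : Finset G) {A : G → ℂ}

def pushforward (A : G → ℂ) (n : H) : ℂ :=
  ∑ i ∈ S with φ i = n, A i

lemma pushforward_eq_zero {n : H} (hn : n ∉ S.image φ) : pushforward φ S A n = 0 := by
  refine sum_eq_zero fun i hi => ?_
  rw [mem_filter] at hi
  exact absurd (hi.2 ▸ mem_image_of_mem φ hi.1) hn

lemma pushforward_apply_of_injOn (hφ : Set.InjOn φ S) {i : G} (hi : i ∈ S) :
    pushforward φ S A (φ i) = A i := by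
  refine sum_eq_single_of_mem i (mem_filter.2 ⟨hi, rfl⟩) fun j hj hji => ?_
  exact absurd (hφ (mem_filter.1 hj).1 hi (mem_filter.1 hj).2) hji

lemma autocorr_pushforward_eq_sum_pairs (u : H) :
    autocorr (pushforward φ S A) u =
      ∑ i ∈ S, ∑ j ∈ S with φ j = φ i + u, A i * conj (A j) := by
  calc autocorr (pushforward φ S A) u
      = ∑ n ∈ S.image φ, pushforward φ S A n * conj (pushforward φ S A (n + u)) :=
        autocorr_eq_sum (fun n hn => pushforward_eq_zero φ S hn) u
    _ = ∑ n ∈ S.image φ, ∑ i ∈ S with φ i = n,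
          A i * conj (pushforward φ S A (φ i + u)) := by
        refine sum_congr rfl fun n _ => ?_
        rw [pushforward, sum_mul]
        exact sum_congr rfl fun i hi => by rw [(mem_filter.1 hi).2]
    _ = ∑ i ∈ S, A i * conj (pushforward φ S A (φ i + u)) :=
        sum_fiberwise_of_maps_to (fun i hi => mem_image_of_mem φ hi) _
    _ = _ := by simp only [pushforward, map_sum, mul_sum]

lemma sum_filter_sub_eq_sum_shift [DecidableEq G] (hA : ∀ i ∉ S, A i = 0) {i : G} (hi : i ∈ S)
    (u : H) :
    ∑ v ∈ S - S with φ v = u, A i * conj (A (i + v)) =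
      ∑ j ∈ S with φ j = φ i + u, A i * conj (A j) := by
  rw [← sum_filter_of_ne (p := fun v => i + v ∈ S) fun v _ h => by
    contrapose! h; rw [hA _ h, map_zero, mul_zero], filter_filter]
  refine sum_nbij' (i + ·) (· - i) ?_ ?_ ?_ ?_ fun _ _ => rfl
  · intro v hv
    rw [mem_filter] at hv ⊢
    exact ⟨hv.2.2, by rw [map_add, hv.2.1]⟩
  · intro j hj
    rw [mem_filter] at hj ⊢
    refine ⟨sub_mem_sub hj.1 hi, ?_, by rw [add_sub_cancel]; exact hj.1⟩
    rw [map_sub, hj.2, add_sub_cancel_left]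
  · intro v _; exact add_sub_cancel_left i v
  · intro j _; exact add_sub_cancel i j

theorem autocorr_pushforward [DecidableEq G] (hA : ∀ i ∉ S, A i = 0) (u : H) :
    autocorr (pushforward φ S A) u = ∑ v ∈ S - S with φ v = u, autocorr A v := by
  simp only [autocorr_pushforward_eq_sum_pairs, autocorr_eq_sum hA]
  rw [sum_comm]
  exact sum_congr rfl fun i hi => (sum_filter_sub_eq_sum_shift φ S hA hi u).symm

theorem autocorr_pushforward_add_add_eq_zero [DecidableEq G] {B C : G → ℂ}
    (hA : ∀ i ∉ S, A i = 0) (hB : ∀ i ∉ S, B i = 0) (hC : ∀ i ∉ S, C i = 0)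
    (h : ∀ v ≠ 0, autocorr A v + autocorr B v + autocorr C v = 0) {u : H} (hu : u ≠ 0) :
    autocorr (pushforward φ S A) u + autocorr (pushforward φ S B) u +
      autocorr (pushforward φ S C) u = 0 := by
  simp only [autocorr_pushforward φ S hA, autocorr_pushforward φ S hB,
    autocorr_pushforward φ S hC, ← sum_add_distrib]
  refine sum_eq_zero fun v hv => h v ?_
  rintro rfl
  exact hu ((mem_filter.1 hv).2 ▸ φ.map_zero)

end Pushforward

section MixedRadix

variable {r : ℕ} (s : Fin r → ℕ)

def mixedRadix : (Fin r → ℤ) →+ ℤ where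
  toFun v := ∑ k, v k * ∏ j : Fin k, (s (Fin.castLE k.is_lt.le j) : ℤ)
  map_zero' := by simp
  map_add' v w := by simp [add_mul, sum_add_distrib]

noncomputable def indexBox : Finset (Fin r → ℤ) :=
  Fintype.piFinset fun k => Ico 0 (s k : ℤ)

lemma mem_indexBox {i : Fin r → ℤ} : i ∈ indexBox s ↔ ∀ k, 0 ≤ i k ∧ i k < s k := by
  simp [indexBox]

lemma coe_indexBox :
    (indexBox s : Set (Fin r → ℤ)) = Set.range fun (f : ∀ k, Fin (s k)) k => (f k : ℤ) := by
  ext i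
  simp only [mem_coe, mem_indexBox, Set.mem_range]
  constructor
  · intro hi
    exact ⟨fun k => ⟨(i k).toNat, by have := hi k; omega⟩, funext fun k => by simp [(hi k).1]⟩
  · rintro ⟨f, rfl⟩ k
    exact ⟨by positivity, Int.ofNat_lt.2 (f k).is_lt⟩

lemma mixedRadix_natCast (f : ∀ k, Fin (s k)) :
    mixedRadix s (fun k => (f k : ℤ)) = (finPiFinEquiv f : ℕ) := by
  simp [mixedRadix, finPiFinEquiv_apply]

theorem bijOn_mixedRadix_indexBox :
    Set.BijOn (mixedRadix s) (indexBox s) (Set.Ico 0 (∏ k, s k : ℕ)) := by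
  have hcast : Function.Injective fun (f : ∀ k, Fin (s k)) k => (f k : ℤ) := by
    intro f g hfg
    funext k
    exact Fin.ext (Int.ofNat_inj.1 (congrFun hfg k))
  rw [coe_indexBox, ← Set.image_univ, ← Set.bijOn_comp_iff hcast.injOn]
  have hcomp : mixedRadix s ∘ (fun (f : ∀ k, Fin (s k)) k => (f k : ℤ)) =
      (fun m : Fin (∏ k, s k) => (m : ℤ)) ∘ finPiFinEquiv :=
    funext (mixedRadix_natCast s)
  rw [hcomp]
  refine Set.BijOn.comp
    ⟨fun m _ => ?_, fun m _ n _ h => Fin.ext (Int.ofNat_inj.1 h), fun n hn => ?_⟩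
    finPiFinEquiv.bijective.bijOn_univ
  · exact ⟨by positivity, Int.ofNat_lt.2 m.is_lt⟩
  · exact ⟨⟨n.toNat, by have := hn.1; have := hn.2; omega⟩, trivial, Int.toNat_of_nonneg hn.1⟩

end MixedRadix

namespace IsThreePhaseArr

variable {r : ℕ} {s : Fin r → ℕ} {A : (Fin r → ℤ) → ℂ}

lemma eq_zero_of_notMem_indexBox (hA : IsThreePhaseArr r s A) :
    ∀ i ∉ indexBox s, A i = 0 := by
  intro i hi
  rw [mem_indexBox] at hi
  push Not at hi
  obtain ⟨k, hk⟩ := hi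
  exact hA.1 i ⟨k, by omega⟩

theorem isThreePhaseSeq_pushforward (hA : IsThreePhaseArr r s A) :
    IsThreePhaseSeq (∏ k, s k) (pushforward (mixedRadix s) (indexBox s) A) := by
  have hbij := bijOn_mixedRadix_indexBox s
  constructor
  · intro n hn
    refine pushforward_eq_zero _ _ fun hmem => ?_
    obtain ⟨i, hi, rfl⟩ := mem_image.1 hmem
    have := hbij.mapsTo hi
    simp only [Set.mem_Ico] at this
    omega
  · intro n h0 hN
    obtain ⟨i, hi, rfl⟩ := hbij.surjOn ⟨h0, hN⟩
    rw [pushforward_apply_of_injOn _ _ hbij.injOn hi]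
    exact hA.2 i ((mem_indexBox s).1 hi)

end IsThreePhaseArr

/-- If there exists a 3-phase `s₁ × ⋯ × s_r` Golay array triad, then there
exists a 3-phase Golay sequence triad of length `∏ₖ s_k`. -/
theorem golay_array_triad_to_seq_triad (r : ℕ) (s : Fin r → ℕ)
    (h : ∃ A B C : (Fin r → ℤ) → ℂ, GolayArrTriad r s A B C) :
    ∃ A B C : ℤ → ℂ, GolaySeqTriad (∏ k, s k) A B C := by
  obtain ⟨A, B, C, hA, hB, hC, htriad⟩ := h
  refine ⟨_, _, _, hA.isThreePhaseSeq_pushforward, hB.isThreePhaseSeq_pushforward,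
    hC.isThreePhaseSeq_pushforward, fun u hu => ?_⟩
  exact autocorr_pushforward_add_add_eq_zero (mixedRadix s) (indexBox s)
    hA.eq_zero_of_notMem_indexBox hB.eq_zero_of_notMem_indexBox hC.eq_zero_of_notMem_indexBox
    htriad hu
end

section
/- (Cross-correlation, 2 × s case.) Suppose that A₁, B₁, C₁ form a 3-phase length s Golay sequence triad, that A₃, B₃, C₃ form a 3-phase length s Golay sequence triad, and that for all integers u, C_{A₁,A₃}(u) + C_{B₁,B₃}(u) + C_{C₁,C₃}(u) = 0. Define the 2 × s arrays U, V, W by U(0,i) = A₁(i), U(1,i) = A₃(i); V(0,i) = B₁(i), V(1,i) = B₃(i); W(0,i) = C₁(i), W(1,i) = C₃(i) (with value 0 when the row index is not 0 or 1). Then U, V, W form a 3-phase 2 × s Golay array triad. -/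
open scoped BigOperators

/-- Aperiodic cross-correlation function
`C_{A,B}(u) = Σ_{i ∈ ℤ} A(i) conj(B(i+u))`. -/
noncomputable def crossCorr (A B : ℤ → ℂ) (u : ℤ) : ℂ :=
  ∑' i : ℤ, A i * (starRingEnd ℂ) (B (i + u))

/-- A 3-phase `s₁ × s₂` array: vanishes outside
`{0,…,s₁−1} × {0,…,s₂−1}` and takes values in `{1, ω, ω²}` on this index
set. -/
def IsThreePhaseArr2 (s₁ s₂ : ℕ) (D : ℤ → ℤ → ℂ) : Prop :=
  (∀ i₁ i₂ : ℤ, (i₁ < 0 ∨ (s₁ : ℤ) ≤ i₁) ∨ (i₂ < 0 ∨ (s₂ : ℤ) ≤ i₂) → D i₁ i₂ = 0) ∧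
    ∀ i₁ i₂ : ℤ, 0 ≤ i₁ → i₁ < (s₁ : ℤ) → 0 ≤ i₂ → i₂ < (s₂ : ℤ) →
      D i₁ i₂ ∈ ({1, ω, ω ^ 2} : Set ℂ)

/-- Aperiodic autocorrelation of a two-dimensional array. -/
noncomputable def aperCorr2 (D : ℤ → ℤ → ℂ) (u₁ u₂ : ℤ) : ℂ :=
  ∑' p : ℤ × ℤ, D p.1 p.2 * (starRingEnd ℂ) (D (p.1 + u₁) (p.2 + u₂))

/-- Three 3-phase `s₁ × s₂` arrays forming a 3-phase Golay array triad. -/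
def GolayArrTriad2 (s₁ s₂ : ℕ) (U V W : ℤ → ℤ → ℂ) : Prop :=
  IsThreePhaseArr2 s₁ s₂ U ∧ IsThreePhaseArr2 s₁ s₂ V ∧ IsThreePhaseArr2 s₁ s₂ W ∧
    ∀ u₁ u₂ : ℤ, ¬ (u₁ = 0 ∧ u₂ = 0) →
      aperCorr2 U u₁ u₂ + aperCorr2 V u₁ u₂ + aperCorr2 W u₁ u₂ = 0

/-- The `2 × s` array with rows `X` and `Y` (zero off rows `0` and `1`). -/
def rows2 (X Y : ℤ → ℂ) : ℤ → ℤ → ℂ :=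
  fun i₁ i => if i₁ = 0 then X i else if i₁ = 1 then Y i else 0

/-- The `3 × s` array with rows `X`, `Y`, `Z` (zero off rows `0`, `1`, `2`). -/
def rows3 (X Y Z : ℤ → ℂ) : ℤ → ℤ → ℂ :=
  fun i₁ i => if i₁ = 0 then X i else if i₁ = 1 then Y i else if i₁ = 2 then Z i else 0

/-! Summing first over the row index, the autocorrelation of a two-row array at shift `(u₁, u₂)`
is the sum of the autocorrelations of its rows at `u₂` if `u₁ = 0`, the cross-correlation of
its rows at `u₂` if `u₁ = ±1`, and `0` otherwise. For `u₁ = 0` the two triad conditions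
make the sum over `U, V, W` vanish; for `u₁ = 1` it is the cross-correlation hypothesis, and
for `u₁ = -1` its complex conjugate at `-u₂`, since `C_{B,A}(u) = conj (C_{A,B}(-u))`. -/

def IsArr2 (s₁ s₂ : ℕ) (D : ℤ → ℤ → ℂ) : Prop :=
  ∀ i₁ i₂ : ℤ, (i₁ < 0 ∨ (s₁ : ℤ) ≤ i₁) ∨ (i₂ < 0 ∨ (s₂ : ℤ) ≤ i₂) → D i₁ i₂ = 0

theorem IsLenSeq.tsum_mul_eq_sum {s : ℕ} {A : ℤ → ℂ} (hA : IsLenSeq s A) (g : ℤ → ℂ) :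
    ∑' i : ℤ, A i * g i = ∑ i ∈ Finset.Ico (0 : ℤ) s, A i * g i :=
  tsum_eq_sum fun i hi => by
    rw [hA i (by simp only [Finset.mem_Ico] at hi; omega), zero_mul]

theorem aperCorr_eq_crossCorr (A : ℤ → ℂ) : aperCorr A = crossCorr A A :=
  rfl

@[simp]
theorem crossCorr_zero_right (A : ℤ → ℂ) (u : ℤ) : crossCorr A 0 u = 0 := by
  simp [crossCorr]

theorem crossCorr_swap (A B : ℤ → ℂ) (u : ℤ) :
    crossCorr B A u = starRingEnd ℂ (crossCorr A B (-u)) := by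
  rw [crossCorr, crossCorr, Complex.conj_tsum]
  conv_rhs => rw [← (Equiv.addRight u).tsum_eq]
  refine tsum_congr fun i => ?_
  simp [mul_comm]

theorem aperCorr2_eq_sum_crossCorr {s₁ s₂ : ℕ} {D : ℤ → ℤ → ℂ} (hD : IsArr2 s₁ s₂ D)
    (u₁ u₂ : ℤ) :
    aperCorr2 D u₁ u₂ = ∑ r ∈ Finset.Ico (0 : ℤ) s₁, crossCorr (D r) (D (r + u₁)) u₂ := by
  have hrow (r : ℤ) : IsLenSeq s₂ (D r) := fun i hi => hD r i (Or.inr hi)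
  rw [aperCorr2, tsum_eq_sum (s := Finset.Ico (0 : ℤ) s₁ ×ˢ Finset.Ico (0 : ℤ) s₂),
    Finset.sum_product]
  · exact Finset.sum_congr rfl fun r _ => ((hrow r).tsum_mul_eq_sum _).symm
  · intro p hp
    rw [hD p.1 p.2 (by simp only [Finset.mem_product, Finset.mem_Ico] at hp; omega), zero_mul]

section rows2

variable {X Y : ℤ → ℂ}

@[simp]
theorem rows2_zero : rows2 X Y 0 = X :=
  rfl

@[simp]
theorem rows2_one : rows2 X Y 1 = Y :=
  rfl

theorem rows2_of_ne {r : ℤ} (h₀ : r ≠ 0) (h₁ : r ≠ 1) : rows2 X Y r = 0 := by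
  funext i
  simp [rows2, h₀, h₁]

theorem isArr2_rows2 {s : ℕ} (hX : IsLenSeq s X) (hY : IsLenSeq s Y) :
    IsArr2 2 s (rows2 X Y) := by
  rintro r i (hr | hi)
  · rw [rows2_of_ne (by omega) (by omega), Pi.zero_apply]
  · unfold rows2
    split_ifs <;> simp [hX i hi, hY i hi]

theorem isThreePhaseArr2_rows2 {s : ℕ} (hX : IsThreePhaseSeq s X) (hY : IsThreePhaseSeq s Y) :
    IsThreePhaseArr2 2 s (rows2 X Y) := by
  refine ⟨isArr2_rows2 hX.1 hY.1, fun r i hr₀ hr₂ hi₀ hi => ?_⟩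
  obtain rfl | rfl : r = 0 ∨ r = 1 := by omega
  · exact hX.2 i hi₀ hi
  · exact hY.2 i hi₀ hi

theorem aperCorr2_rows2 {s : ℕ} (hX : IsLenSeq s X) (hY : IsLenSeq s Y) (u₁ u₂ : ℤ) :
    aperCorr2 (rows2 X Y) u₁ u₂ =
      if u₁ = 0 then aperCorr X u₂ + aperCorr Y u₂
      else if u₁ = 1 then crossCorr X Y u₂
      else if u₁ = -1 then crossCorr Y X u₂
      else 0 := by
  have hrows : Finset.Ico (0 : ℤ) (2 : ℕ) = {0, 1} := by decide
  rw [aperCorr2_eq_sum_crossCorr (isArr2_rows2 hX hY), hrows, Finset.sum_pair zero_ne_one,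
    rows2_zero, rows2_one, zero_add]
  split_ifs with h₀ h₁ hneg
  · simp [h₀, aperCorr_eq_crossCorr]
  · rw [h₁, rows2_of_ne (r := 1 + 1) (by norm_num) (by norm_num)]
    simp
  · rw [hneg, rows2_of_ne (r := -1) (by norm_num) (by norm_num)]
    simp
  · rw [rows2_of_ne h₀ h₁, rows2_of_ne (r := 1 + u₁) (by omega) (by omega)]
    simp

end rows2

/-- (Cross-correlation, `2 × s` case.) If `A₁, B₁, C₁` and `A₃, B₃, C₃` are
3-phase length-`s` Golay sequence triads with
`C_{A₁,A₃}(u) + C_{B₁,B₃}(u) + C_{C₁,C₃}(u) = 0` for all `u`, then stacking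
them row-wise gives a 3-phase `2 × s` Golay array triad. -/
theorem cross_correlation_two_by_s (s : ℕ) (A₁ B₁ C₁ A₃ B₃ C₃ : ℤ → ℂ)
    (h1 : GolaySeqTriad s A₁ B₁ C₁) (h3 : GolaySeqTriad s A₃ B₃ C₃)
    (hcc : ∀ u : ℤ,
      crossCorr A₁ A₃ u + crossCorr B₁ B₃ u + crossCorr C₁ C₃ u = 0) :
    GolayArrTriad2 2 s (rows2 A₁ A₃) (rows2 B₁ B₃) (rows2 C₁ C₃) := by
  obtain ⟨hA₁, hB₁, hC₁, hauto₁⟩ := h1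
  obtain ⟨hA₃, hB₃, hC₃, hauto₃⟩ := h3
  refine ⟨isThreePhaseArr2_rows2 hA₁ hA₃, isThreePhaseArr2_rows2 hB₁ hB₃,
    isThreePhaseArr2_rows2 hC₁ hC₃, fun u₁ u₂ hu => ?_⟩
  rw [aperCorr2_rows2 hA₁.1 hA₃.1, aperCorr2_rows2 hB₁.1 hB₃.1, aperCorr2_rows2 hC₁.1 hC₃.1]
  split_ifs with h₀ h₁ hneg
  · have hu₂ : u₂ ≠ 0 := fun h => hu ⟨h₀, h⟩
    linear_combination hauto₁ u₂ hu₂ + hauto₃ u₂ hu₂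
  · exact hcc u₂
  · rw [crossCorr_swap A₁, crossCorr_swap B₁, crossCorr_swap C₁, ← map_add, ← map_add,
      hcc, map_zero]
  · ring
end
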